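/- arXiv:1204.2410 — 3 statements merged into one kernel-verified Lean document; each statement's English description precedes it below -/
import Mathlib

section
/- For every integer n ≥ 1 and every real number x, one has ∑_{k=1}^{n} (−1)_k · s_{nk}(x) = (−x)_n, where (−1)_k and (−x)_n are falling factorials. -/
noncomputable section

/-- Stirling numbers of the first kind `s(n,k)` (signed), real-valued,
defined by the recurrence `s(n+1,k) = s(n,k-1) - n·s(n,k)`. -/
def st1 : ℕ → ℕ → ℝ
  | 0, 0 => 1
  | 0, _ + 1 => 0
  | _ + 1, 0 => 0
  | n + 1, k + 1 => st1 n k - (n : ℝ) * st1 n (k + 1)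

/-- Stirling numbers of the second kind `S(n,k)`, real-valued,
defined by the recurrence `S(n+1,k) = S(n,k-1) + k·S(n,k)`. -/
def st2 : ℕ → ℕ → ℝ
  | 0, 0 => 1
  | 0, _ + 1 => 0
  | _ + 1, 0 => 0
  | n + 1, k + 1 => st2 n k + ((k : ℝ) + 1) * st2 n (k + 1)

/-- `snk n k x = ∑_{l=k}^n s(n,l) S(l,k) x^l`. -/
def snk (n k : ℕ) (x : ℝ) : ℝ := ∑ l ∈ Finset.Icc k n, st1 n l * st2 l k * x ^ l

/-- Falling factorial `(x)_n = x (x-1) ⋯ (x-n+1)`, with `(x)_0 = 1`. -/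
def ff (x : ℝ) (n : ℕ) : ℝ := ∏ i ∈ Finset.range n, (x - (i : ℝ))

/-- The index set `P_{n,k}`: tuples `(j_1, …, j_{n-k+1})`, 0-indexed by `Fin (n-k+1)`
(entry `i` representing `j_{i+1}`), with `∑ i·j_i = n` and `∑ j_i = k`. -/
def PIdx (n k : ℕ) : Finset (Fin (n - k + 1) → ℕ) :=
  (Fintype.piFinset fun _ => Finset.range (n + 1)).filter fun j =>
    (∑ i, (i.1 + 1) * j i) = n ∧ (∑ i, j i) = k

/-- The partial Bell polynomial `B_{n,k}(x_1,…,x_{n-k+1})`, the `l`-th argument being `x l`. -/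
def bellP (n k : ℕ) (x : ℕ → ℝ) : ℝ :=
  ∑ j ∈ PIdx n k,
    ((n.factorial : ℝ) / ∏ i, ((j i).factorial : ℝ)) *
      ∏ i, (x (i.1 + 1) / ((i.1 + 1).factorial : ℝ)) ^ j i

/-- The index set `Q^{d₀}_{d,k} = { j : ∑ j_s = k, 1 ≤ j_s ≤ d_s }`. -/
def QIdx (d0 : ℕ) (dv : Fin d0 → ℕ) (k : ℕ) : Finset (Fin d0 → ℕ) :=
  (Fintype.piFinset fun s => Finset.Icc 1 (dv s)).filter fun j => (∑ s, j s) = k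

/-- Complete monotonicity of `h` on `(0,∞)`: `h` is infinitely differentiable there and
`(-1)^k h^{(k)}(t) ≥ 0` for all `k ∈ ℕ₀` and `t ∈ (0,∞)`. -/
def CMOn (h : ℝ → ℝ) : Prop :=
  ContDiffOn ℝ (⊤ : ℕ∞) h (Set.Ioi 0) ∧
    ∀ k : ℕ, ∀ t ∈ Set.Ioi (0 : ℝ), 0 ≤ (-1 : ℝ) ^ k * iteratedDerivWithin k h (Set.Ioi 0) t

/-- Partial derivative of `F : ℝ^ι → ℝ` in the coordinate `i`. -/
def pdrv {ι : Type*} [DecidableEq ι] (i : ι) (F : (ι → ℝ) → ℝ) : (ι → ℝ) → ℝ :=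
  fun x => deriv (fun y => F (Function.update x i y)) (x i)

lemma ff_zero (x : ℝ) : ff x 0 = 1 := Finset.prod_range_zero _

lemma ff_succ (x : ℝ) (n : ℕ) : ff x (n + 1) = ff x n * (x - n) :=
  Finset.prod_range_succ _ _

lemma st1_zero : ∀ n k, n < k → st1 n k = 0 := by
  intro n
  induction n with
  | zero =>
    intro k hk
    match k, hk with
    | k + 1, _ => rfl
  | succ n ih =>
    intro k hk
    match k, hk with
    | k + 1, hk =>
      show st1 n k - (n : ℝ) * st1 n (k + 1) = 0
      rw [ih k (by omega), ih (k + 1) (by omega)]; ring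

lemma st2_zero : ∀ n k, n < k → st2 n k = 0 := by
  intro n
  induction n with
  | zero =>
    intro k hk
    match k, hk with
    | k + 1, _ => rfl
  | succ n ih =>
    intro k hk
    match k, hk with
    | k + 1, hk =>
      show st2 n k + ((k : ℝ) + 1) * st2 n (k + 1) = 0
      rw [ih k (by omega), ih (k + 1) (by omega)]; ring

lemma sumA (l : ℕ) (y : ℝ) :
    ∑ k ∈ Finset.range (l + 1), st2 l k * ff y k = y ^ l := by
  induction l with
  | zero => simp [st2, ff]
  | succ l ih =>
    have h0 : st2 (l + 1) 0 * ff y 0 = 0 := by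
      show (0 : ℝ) * ff y 0 = 0
      ring
    rw [Finset.sum_range_succ' (fun k => st2 (l + 1) k * ff y k) (l + 1), h0, add_zero]
    have hsplit : ∀ k : ℕ, st2 (l + 1) (k + 1) * ff y (k + 1)
        = st2 l k * ff y (k + 1) + ((k : ℝ) + 1) * st2 l (k + 1) * ff y (k + 1) := by
      intro k
      show (st2 l k + ((k : ℝ) + 1) * st2 l (k + 1)) * ff y (k + 1) = _
      ring
    rw [Finset.sum_congr rfl fun k _ => hsplit k, Finset.sum_add_distrib]
    have key : ∑ k ∈ Finset.range (l + 1), ((k : ℝ) + 1) * st2 l (k + 1) * ff y (k + 1)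
        = ∑ k ∈ Finset.range (l + 1), (k : ℝ) * st2 l k * ff y k := by
      have h1 := Finset.sum_range_succ' (fun k => (k : ℝ) * st2 l k * ff y k) (l + 1)
      have h2 := Finset.sum_range_succ (fun k => (k : ℝ) * st2 l k * ff y k) (l + 1)
      rw [h2] at h1
      simp only [Nat.cast_add, Nat.cast_one, Nat.cast_zero, zero_mul] at h1
      rw [st2_zero l (l + 1) (by omega)] at h1
      simp only [mul_zero, zero_mul, add_zero] at h1
      linarith [h1]
    rw [key]
    have : ∑ k ∈ Finset.range (l + 1), st2 l k * ff y (k + 1)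
          + ∑ k ∈ Finset.range (l + 1), (k : ℝ) * st2 l k * ff y k
        = ∑ k ∈ Finset.range (l + 1), st2 l k * ff y k * y := by
      rw [← Finset.sum_add_distrib]
      refine Finset.sum_congr rfl fun k _ => ?_
      rw [ff_succ]
      ring
    rw [this, ← Finset.sum_mul, ih, pow_succ]

lemma sumB (n : ℕ) (z : ℝ) :
    ∑ l ∈ Finset.range (n + 1), st1 n l * z ^ l = ff z n := by
  induction n with
  | zero => simp [st1, ff]
  | succ n ih =>
    have h0 : st1 (n + 1) 0 * z ^ 0 = 0 := by
      show (0 : ℝ) * z ^ 0 = 0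
      ring
    rw [Finset.sum_range_succ' (fun l => st1 (n + 1) l * z ^ l) (n + 1), h0, add_zero]
    have hsplit : ∀ l : ℕ, st1 (n + 1) (l + 1) * z ^ (l + 1)
        = st1 n l * z ^ (l + 1) - (n : ℝ) * (st1 n (l + 1) * z ^ (l + 1)) := by
      intro l
      show (st1 n l - (n : ℝ) * st1 n (l + 1)) * z ^ (l + 1) = _
      ring
    rw [Finset.sum_congr rfl fun l _ => hsplit l, Finset.sum_sub_distrib, ← Finset.mul_sum]
    have key : ∑ l ∈ Finset.range (n + 1), st1 n (l + 1) * z ^ (l + 1)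
        = ∑ l ∈ Finset.range (n + 1), st1 n l * z ^ l - st1 n 0 := by
      have h1 := Finset.sum_range_succ' (fun l => st1 n l * z ^ l) (n + 1)
      have h2 := Finset.sum_range_succ (fun l => st1 n l * z ^ l) (n + 1)
      rw [h2] at h1
      rw [st1_zero n (n + 1) (by omega)] at h1
      simp only [zero_mul, add_zero, pow_zero, mul_one] at h1
      linarith [h1]
    rw [key]
    have hn0 : (n : ℝ) * st1 n 0 = 0 := by
      cases n with
      | zero => simp
      | succ m =>
        show ((m + 1 : ℕ) : ℝ) * (0 : ℝ) = 0
        ring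
    have : ∑ l ∈ Finset.range (n + 1), st1 n l * z ^ (l + 1)
        = (∑ l ∈ Finset.range (n + 1), st1 n l * z ^ l) * z := by
      rw [Finset.sum_mul]
      refine Finset.sum_congr rfl fun l _ => ?_
      rw [pow_succ]; ring
    rw [this, ih, ff_succ, mul_sub, hn0]
    ring

/-- `∑_{k=1}^n (-1)_k s_{nk}(x) = (-x)_n`. -/
theorem stmt5 (n : ℕ) (hn : 1 ≤ n) (x : ℝ) :
    ∑ k ∈ Finset.Icc 1 n, ff (-1) k * snk n k x = ff (-x) n := by
  -- extend the inner sum over l to range (n+1)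
  have hsnk : ∀ k ∈ Finset.Icc 1 n, ff (-1) k * snk n k x
      = ∑ l ∈ Finset.range (n + 1), ff (-1) k * (st1 n l * st2 l k * x ^ l) := by
    intro k hk
    simp only [Finset.mem_Icc] at hk
    rw [snk, Finset.mul_sum]
    refine Finset.sum_subset ?_ ?_
    · intro l hl
      simp only [Finset.mem_range, Finset.mem_Icc] at *
      omega
    · intro l hl hl2
      simp only [Finset.mem_range, Finset.mem_Icc] at hl hl2
      rw [st2_zero l k (by omega)]
      ring
  rw [Finset.sum_congr rfl hsnk]
  -- extend outer sum to range (n+1)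
  have hout : ∑ k ∈ Finset.Icc 1 n,
        ∑ l ∈ Finset.range (n + 1), ff (-1) k * (st1 n l * st2 l k * x ^ l)
      = ∑ k ∈ Finset.range (n + 1),
        ∑ l ∈ Finset.range (n + 1), ff (-1) k * (st1 n l * st2 l k * x ^ l) := by
    refine Finset.sum_subset ?_ ?_
    · intro k hk
      simp only [Finset.mem_range, Finset.mem_Icc] at *
      omega
    · intro k hk hk2
      simp only [Finset.mem_range, Finset.mem_Icc] at hk hk2
      have hk0 : k = 0 := by omega
      subst hk0
      refine Finset.sum_eq_zero fun l hl => ?_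
      cases l with
      | zero =>
        obtain ⟨m, rfl⟩ : ∃ m, n = m + 1 := ⟨n - 1, by omega⟩
        have : st1 (m + 1) 0 = 0 := rfl
        rw [this]; ring
      | succ m =>
        have : st2 (m + 1) 0 = 0 := rfl
        rw [this]; ring
  rw [hout, Finset.sum_comm]
  have hinner : ∀ l ∈ Finset.range (n + 1),
      ∑ k ∈ Finset.range (n + 1), ff (-1) k * (st1 n l * st2 l k * x ^ l)
      = st1 n l * x ^ l * (-1 : ℝ) ^ l := by
    intro l hl
    simp only [Finset.mem_range] at hl
    have h1 : ∑ k ∈ Finset.range (n + 1), ff (-1) k * (st1 n l * st2 l k * x ^ l)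
        = ∑ k ∈ Finset.range (l + 1), ff (-1) k * (st1 n l * st2 l k * x ^ l) := by
      refine (Finset.sum_subset ?_ ?_).symm
      · intro k hk
        simp only [Finset.mem_range] at *
        omega
      · intro k hk hk2
        simp only [Finset.mem_range] at hk hk2
        rw [st2_zero l k (by omega)]
        ring
    rw [h1]
    have h2 : ∑ k ∈ Finset.range (l + 1), ff (-1) k * (st1 n l * st2 l k * x ^ l)
        = st1 n l * x ^ l * ∑ k ∈ Finset.range (l + 1), st2 l k * ff (-1) k := by
      rw [Finset.mul_sum]
      refine Finset.sum_congr rfl fun k _ => ?_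
      ring
    rw [h2, sumA]
  rw [Finset.sum_congr rfl hinner]
  have : ∀ l ∈ Finset.range (n + 1),
      st1 n l * x ^ l * (-1 : ℝ) ^ l = st1 n l * (-x) ^ l := by
    intro l _
    rw [neg_pow]
    ring
  rw [Finset.sum_congr rfl this, sumB]
end
end

section
/- Let x be a real number, y > 0, and define h : (0,∞) → ℝ by h(t) = exp((y·t)^x). Then for every integer n ≥ 1 and every t > 0, the n-th derivative of h satisfies h^{(n)}(t) = (h(t)/t^n) · ∑_{k=1}^{n} y^{xk} · s_{nk}(x) · t^{xk}. -/
noncomputable section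

lemma st1_eq_zero : ∀ n k : ℕ, n < k → st1 n k = 0 := by
  intro n
  induction n with
  | zero =>
    intro k hk
    obtain ⟨m, rfl⟩ : ∃ m, k = m + 1 := ⟨k - 1, by omega⟩
    rfl
  | succ n ih =>
    intro k hk
    obtain ⟨m, rfl⟩ : ∃ m, k = m + 1 := ⟨k - 1, by omega⟩
    show st1 n m - (n : ℝ) * st1 n (m + 1) = 0
    rw [ih m (by omega), ih (m + 1) (by omega)]
    ring

lemma st2_eq_zero : ∀ n k : ℕ, n < k → st2 n k = 0 := by
  intro n
  induction n with
  | zero =>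
    intro k hk
    obtain ⟨m, rfl⟩ : ∃ m, k = m + 1 := ⟨k - 1, by omega⟩
    rfl
  | succ n ih =>
    intro k hk
    obtain ⟨m, rfl⟩ : ∃ m, k = m + 1 := ⟨k - 1, by omega⟩
    show st2 n m + ((m : ℝ) + 1) * st2 n (m + 1) = 0
    rw [ih m (by omega), ih (m + 1) (by omega)]
    ring

lemma snk_zero (n : ℕ) (hn : 1 ≤ n) (x : ℝ) : snk n 0 x = 0 := by
  refine Finset.sum_eq_zero fun l hl => ?_
  rcases Nat.eq_zero_or_pos l with rfl | hl'
  · obtain ⟨m, rfl⟩ : ∃ m, n = m + 1 := ⟨n - 1, by omega⟩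
    show st1 (m + 1) 0 * st2 0 0 * x ^ 0 = 0
    show (0 : ℝ) * st2 0 0 * x ^ 0 = 0
    ring
  · obtain ⟨m, rfl⟩ : ∃ m, l = m + 1 := ⟨l - 1, by omega⟩
    show st1 n (m + 1) * st2 (m + 1) 0 * x ^ (m + 1) = 0
    have : st2 (m + 1) 0 = 0 := rfl
    rw [this]; ring

lemma snk_gt (n k : ℕ) (h : n < k) (x : ℝ) : snk n k x = 0 := by
  unfold snk
  rw [Finset.Icc_eq_empty (by omega)]
  simp

lemma sum_Icc_shift (a m : ℕ) (f : ℕ → ℝ) :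
    ∑ l ∈ Finset.Icc (a + 1) (m + 1), f l = ∑ i ∈ Finset.Icc a m, f (i + 1) := by
  induction m with
  | zero =>
    rcases Nat.eq_zero_or_pos a with rfl | ha
    · simp
    · rw [Finset.Icc_eq_empty (show ¬ (a + 1) ≤ 0 + 1 by omega),
        Finset.Icc_eq_empty (show ¬ a ≤ 0 by omega)]
      simp
  | succ m ih =>
    rcases le_or_gt a (m + 1) with ha | ha
    · rw [Finset.sum_Icc_succ_top (show a + 1 ≤ m + 1 + 1 by omega) f,
        Finset.sum_Icc_succ_top (show a ≤ m + 1 by omega) (fun i => f (i + 1)), ih]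
    · rw [Finset.Icc_eq_empty (show ¬ (a + 1) ≤ m + 1 + 1 by omega),
        Finset.Icc_eq_empty (show ¬ a ≤ m + 1 by omega)]
      simp

lemma snk_rec (n k : ℕ) (x : ℝ) :
    snk (n + 1) (k + 1) x
      = x * snk n k x + (x * ((k : ℝ) + 1) - (n : ℝ)) * snk n (k + 1) x := by
  have hA : x * snk n k x = ∑ i ∈ Finset.Icc k n, st1 n i * st2 i k * x ^ (i + 1) := by
    rw [snk, Finset.mul_sum]
    exact Finset.sum_congr rfl fun i _ => by ring
  have hB : x * snk n (k + 1) x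
      = ∑ i ∈ Finset.Icc k n, st1 n i * st2 i (k + 1) * x ^ (i + 1) := by
    rw [snk, Finset.mul_sum]
    rw [← Finset.sum_subset (Finset.Icc_subset_Icc_left (Nat.le_succ k))
      (fun i hi hi' => ?_)]
    · exact Finset.sum_congr rfl fun i _ => by ring
    · have : i = k := by
        simp only [Finset.mem_Icc] at hi hi'; omega
      subst this
      rw [st2_eq_zero i (i + 1) (by omega)]; ring
  have hC : snk n (k + 1) x
      = ∑ i ∈ Finset.Icc k n, st1 n (i + 1) * st2 (i + 1) (k + 1) * x ^ (i + 1) := by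
    rw [show (∑ i ∈ Finset.Icc k n, st1 n (i + 1) * st2 (i + 1) (k + 1) * x ^ (i + 1))
        = ∑ l ∈ Finset.Icc (k + 1) (n + 1), st1 n l * st2 l (k + 1) * x ^ l
        from (sum_Icc_shift k n (fun l => st1 n l * st2 l (k + 1) * x ^ l)).symm, snk]
    refine Finset.sum_subset (Finset.Icc_subset_Icc_right (Nat.le_succ n)) fun l hl hl' => ?_
    have : l = n + 1 := by simp only [Finset.mem_Icc] at hl hl'; omega
    subst this
    rw [st1_eq_zero n (n + 1) (by omega)]; ring
  have lhs : snk (n + 1) (k + 1) x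
      = ∑ i ∈ Finset.Icc k n, st1 (n + 1) (i + 1) * st2 (i + 1) (k + 1) * x ^ (i + 1) := by
    rw [snk, sum_Icc_shift]
  rw [lhs, show (x * ((k : ℝ) + 1) - (n : ℝ)) * snk n (k + 1) x
      = ((k : ℝ) + 1) * (x * snk n (k + 1) x) - (n : ℝ) * snk n (k + 1) x from by ring,
    hA, hB, hC, Finset.mul_sum, Finset.mul_sum, ← Finset.sum_sub_distrib,
    ← Finset.sum_add_distrib]
  refine Finset.sum_congr rfl fun i hi => ?_
  rw [show st1 (n + 1) (i + 1) = st1 n i - (n : ℝ) * st1 n (i + 1) from rfl,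
    show st2 (i + 1) (k + 1) = st2 i k + ((k : ℝ) + 1) * st2 i (k + 1) from rfl]
  ring

lemma sum_Icc_one (m : ℕ) (f : ℕ → ℝ) :
    ∑ k ∈ Finset.Icc 1 m, f k = ∑ i ∈ Finset.range m, f (i + 1) := by
  induction m with
  | zero => simp
  | succ m ih => rw [Finset.sum_Icc_succ_top (by omega) f, ih, Finset.sum_range_succ]

lemma key_id (x y : ℝ) (hy : 0 < y) (n : ℕ) (hn : 1 ≤ n) (t : ℝ) (ht : 0 < t) :
    x * (y * t) ^ (x - 1) * y *
        ∑ k ∈ Finset.Icc 1 n, y ^ (x * (k : ℝ)) * snk n k x * t ^ (x * (k : ℝ) - (n : ℝ)) +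
      ∑ k ∈ Finset.Icc 1 n,
        y ^ (x * (k : ℝ)) * snk n k x *
          ((x * (k : ℝ) - (n : ℝ)) * t ^ (x * (k : ℝ) - (n : ℝ) - 1)) =
    ∑ k ∈ Finset.Icc 1 (n + 1),
      y ^ (x * (k : ℝ)) * snk (n + 1) k x * t ^ (x * (k : ℝ) - ((n : ℝ) + 1)) := by
  have hy0 : y ≠ 0 := hy.ne'
  have ht0 : t ≠ 0 := ht.ne'
  rw [sum_Icc_one, sum_Icc_one, sum_Icc_one, Finset.mul_sum]
  have hRHS : ∀ i ∈ Finset.range (n + 1),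
      y ^ (x * ((i + 1 : ℕ) : ℝ)) * snk (n + 1) (i + 1) x *
          t ^ (x * ((i + 1 : ℕ) : ℝ) - ((n : ℝ) + 1))
        = (fun i : ℕ => x * (y ^ (x * ((i : ℝ) + 1)) * snk n i x *
              t ^ (x * ((i : ℝ) + 1) - ((n : ℝ) + 1)))) i
          + (fun i : ℕ => (x * ((i : ℝ) + 1) - (n : ℝ)) *
              (y ^ (x * ((i : ℝ) + 1)) * snk n (i + 1) x *
                t ^ (x * ((i : ℝ) + 1) - ((n : ℝ) + 1)))) i := by
    intro i _
    push_cast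
    rw [snk_rec n i x]
    ring
  have hcongr := Finset.sum_congr rfl hRHS
  rw [hcongr]
  rw [Finset.sum_add_distrib]
  rw [Finset.sum_range_succ']
  rw [Finset.sum_range_succ]
  rw [snk_zero n hn, snk_gt n (n + 1) (by omega)]
  simp only [mul_zero, zero_mul, add_zero]
  rw [← Finset.sum_add_distrib, ← Finset.sum_add_distrib]
  refine Finset.sum_congr rfl fun i _ => ?_
  push_cast
  have e1 : (y * t) ^ (x - 1) = y ^ x / y * (t ^ x / t) := by
    rw [Real.mul_rpow hy.le ht.le, Real.rpow_sub hy, Real.rpow_sub ht, Real.rpow_one,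
      Real.rpow_one]
  have e2 : t ^ (x * ((i : ℝ) + 1) - (n : ℝ)) = t ^ (x * ((i : ℝ) + 1)) / t ^ (n : ℝ) :=
    Real.rpow_sub ht _ _
  have e3 : t ^ (x * ((i : ℝ) + 1) - (n : ℝ) - 1)
      = t ^ (x * ((i : ℝ) + 1)) / t ^ (n : ℝ) / t := by
    rw [Real.rpow_sub ht, Real.rpow_sub ht, Real.rpow_one]
  have e4 : t ^ (x * ((i : ℝ) + 1 + 1) - ((n : ℝ) + 1))
      = t ^ x * t ^ (x * ((i : ℝ) + 1)) / (t ^ (n : ℝ) * t) := by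
    rw [show x * ((i : ℝ) + 1 + 1) - ((n : ℝ) + 1) = x + x * ((i : ℝ) + 1) - ((n : ℝ) + 1)
      by ring, Real.rpow_sub ht, Real.rpow_add ht, Real.rpow_add ht, Real.rpow_one]
  have e5 : t ^ (x * ((i : ℝ) + 1) - ((n : ℝ) + 1))
      = t ^ (x * ((i : ℝ) + 1)) / (t ^ (n : ℝ) * t) := by
    rw [Real.rpow_sub ht, Real.rpow_add ht, Real.rpow_one]
  have e6 : y ^ (x * ((i : ℝ) + 1 + 1)) = y ^ x * y ^ (x * ((i : ℝ) + 1)) := by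
    rw [show x * ((i : ℝ) + 1 + 1) = x + x * ((i : ℝ) + 1) by ring, Real.rpow_add hy]
  have htn : t ^ (n : ℝ) ≠ 0 := (Real.rpow_pos_of_pos ht _).ne'
  rw [e1, e2, e3, e4, e5, e6]
  field_simp

lemma hasDeriv_step (x y : ℝ) (hy : 0 < y) (n : ℕ) (hn : 1 ≤ n) (t : ℝ) (ht : 0 < t) :
    HasDerivAt
      (fun u : ℝ => Real.exp ((y * u) ^ x) *
        ∑ k ∈ Finset.Icc 1 n, y ^ (x * (k : ℝ)) * snk n k x * u ^ (x * (k : ℝ) - (n : ℝ)))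
      (Real.exp ((y * t) ^ x) *
        ∑ k ∈ Finset.Icc 1 (n + 1),
          y ^ (x * (k : ℝ)) * snk (n + 1) k x * t ^ (x * (k : ℝ) - ((n : ℝ) + 1))) t := by
  have h1 : HasDerivAt (fun u : ℝ => y * u) y t := by
    simpa using (hasDerivAt_id t).const_mul y
  have h2 : HasDerivAt (fun z : ℝ => z ^ x) (x * (y * t) ^ (x - 1)) (y * t) :=
    Real.hasDerivAt_rpow_const (Or.inl (mul_pos hy ht).ne')
  have h3 : HasDerivAt (fun u : ℝ => (y * u) ^ x) (x * (y * t) ^ (x - 1) * y) t :=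
    h2.comp t h1
  have hE : HasDerivAt (fun u : ℝ => Real.exp ((y * u) ^ x))
      (Real.exp ((y * t) ^ x) * (x * (y * t) ^ (x - 1) * y)) t := h3.exp
  have hQ : HasDerivAt
      (fun u : ℝ => ∑ k ∈ Finset.Icc 1 n, y ^ (x * (k : ℝ)) * snk n k x * u ^ (x * (k : ℝ) - (n : ℝ)))
      (∑ k ∈ Finset.Icc 1 n, y ^ (x * (k : ℝ)) * snk n k x *
        ((x * (k : ℝ) - (n : ℝ)) * t ^ (x * (k : ℝ) - (n : ℝ) - 1))) t :=
    HasDerivAt.fun_sum fun k _ =>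
      (Real.hasDerivAt_rpow_const (Or.inl ht.ne')).const_mul _
  have hprod := hE.mul hQ
  have hval : Real.exp ((y * t) ^ x) * (x * (y * t) ^ (x - 1) * y) *
        (∑ k ∈ Finset.Icc 1 n, y ^ (x * (k : ℝ)) * snk n k x * t ^ (x * (k : ℝ) - (n : ℝ))) +
      Real.exp ((y * t) ^ x) *
        ∑ k ∈ Finset.Icc 1 n, y ^ (x * (k : ℝ)) * snk n k x *
          ((x * (k : ℝ) - (n : ℝ)) * t ^ (x * (k : ℝ) - (n : ℝ) - 1))
      = Real.exp ((y * t) ^ x) *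
        ∑ k ∈ Finset.Icc 1 (n + 1),
          y ^ (x * (k : ℝ)) * snk (n + 1) k x * t ^ (x * (k : ℝ) - ((n : ℝ) + 1)) := by
    rw [← key_id x y hy n hn t ht]
    ring
  exact hval ▸ hprod


/-- for `h(t) = exp((y t)^x)` with `y > 0`,
`h^{(n)}(t) = (h(t)/t^n) ∑_{k=1}^n y^{xk} s_{nk}(x) t^{xk}` on `(0,∞)`. -/
theorem stmt7 (x y : ℝ) (hy : 0 < y) (n : ℕ) (hn : 1 ≤ n) (t : ℝ) (ht : 0 < t) :
    iteratedDerivWithin n (fun u => Real.exp ((y * u) ^ x)) (Set.Ioi 0) t =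
      Real.exp ((y * t) ^ x) / t ^ n *
        ∑ k ∈ Finset.Icc 1 n, y ^ (x * (k : ℝ)) * snk n k x * t ^ (x * (k : ℝ)) := by
  have key : ∀ m : ℕ, 1 ≤ m → ∀ s : ℝ, 0 < s →
      iteratedDerivWithin m (fun u => Real.exp ((y * u) ^ x)) (Set.Ioi 0) s
        = Real.exp ((y * s) ^ x) *
            ∑ k ∈ Finset.Icc 1 m, y ^ (x * (k : ℝ)) * snk m k x * s ^ (x * (k : ℝ) - (m : ℝ)) := by
    intro m hm
    induction m, hm using Nat.le_induction with
    | base =>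
      intro s hs
      have h1 : HasDerivAt (fun u : ℝ => y * u) y s := by
        simpa using (hasDerivAt_id s).const_mul y
      have h2 : HasDerivAt (fun z : ℝ => z ^ x) (x * (y * s) ^ (x - 1)) (y * s) :=
        Real.hasDerivAt_rpow_const (Or.inl (mul_pos hy hs).ne')
      have hE : HasDerivAt (fun u : ℝ => Real.exp ((y * u) ^ x))
          (Real.exp ((y * s) ^ x) * (x * (y * s) ^ (x - 1) * y)) s := (h2.comp s h1).exp
      rw [iteratedDerivWithin_one,
        derivWithin_of_isOpen isOpen_Ioi hs, hE.deriv]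
      have hsnk : snk 1 1 x = x := by
        norm_num [snk, st1, st2]
      rw [Finset.Icc_self, Finset.sum_singleton, hsnk]
      have e1 : (y * s) ^ (x - 1) = y ^ x / y * (s ^ x / s) := by
        rw [Real.mul_rpow hy.le hs.le, Real.rpow_sub hy, Real.rpow_sub hs, Real.rpow_one,
          Real.rpow_one]
      have e2 : s ^ (x * ((1 : ℕ) : ℝ) - ((1 : ℕ) : ℝ)) = s ^ x / s := by
        push_cast
        rw [mul_one, Real.rpow_sub hs, Real.rpow_one]
      have e3 : y ^ (x * ((1 : ℕ) : ℝ)) = y ^ x := by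
        push_cast; rw [mul_one]
      rw [e1, e2, e3]
      field_simp
    | succ n hn ih =>
      intro s hs
      rw [iteratedDerivWithin_succ,
        derivWithin_of_isOpen isOpen_Ioi hs]
      have heq : (iteratedDerivWithin n (fun u => Real.exp ((y * u) ^ x)) (Set.Ioi 0))
          =ᶠ[nhds s] (fun u : ℝ => Real.exp ((y * u) ^ x) *
            ∑ k ∈ Finset.Icc 1 n, y ^ (x * (k : ℝ)) * snk n k x * u ^ (x * (k : ℝ) - (n : ℝ))) :=
        Filter.eventuallyEq_of_mem (isOpen_Ioi.mem_nhds hs) (fun u hu => ih u hu)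
      rw [heq.deriv_eq, (hasDeriv_step x y hy n hn s hs).deriv]
      norm_cast
  rw [key n hn t ht, div_mul_eq_mul_div, Finset.mul_sum, Finset.mul_sum, Finset.sum_div]
  refine Finset.sum_congr rfl fun k _ => ?_
  rw [Real.rpow_sub ht, Real.rpow_natCast]
  ring
end
end

section
/- Let μ be a probability measure on (0,∞) and ψ(t) = ∫_0^∞ exp(−v·t) dμ(v) its Laplace transform on (0,∞). Let d_0 ≥ 1 and d_1,…,d_{d_0} ≥ 1 be integers with d = ∑_{s=1}^{d_0} d_s, and for each s ∈ {1,…,d_0} let g_s : (0,∞) → [0,∞) be infinitely differentiable with g_s′ completely monotone. Fix t_1,…,t_{d_0} ∈ (0,∞) with T := ∑_{s=1}^{d_0} g_s(t_s) > 0. Then ∫_0^∞ ∏_{s=1}^{d_0} [ exp(−v·g_s(t_s)) · ∑_{k=1}^{d_s} B_{d_s,k}(g_s′(t_s),…,g_s^{(d_s−k+1)}(t_s))·(−v)^k ] dμ(v) = ∑_{k=d_0}^{d} b_k · ψ^{(k)}(T), where b_k = ∑_{j ∈ Q^{d_0}_{d,k}} ∏_{s=1}^{d_0} B_{d_s,j_s}(g_s′(t_s),…,g_s^{(d_s−j_s+1)}(t_s))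 and ψ^{(k)} denotes the k-th derivative of ψ. -/
noncomputable section

open MeasureTheory Real Set

lemma ae_pos' {μ : Measure ℝ} (hμ : μ (Set.Iic 0) = 0) : ∀ᵐ v ∂μ, 0 < v := by
  rw [ae_iff]
  convert hμ using 2
  ext v; simp [not_lt]

lemma pow_exp_bound {v T : ℝ} (hv : 0 ≤ v) (hT : 0 < T) (k : ℕ) :
    |v ^ k * Real.exp (-v * T)| ≤ (k.factorial : ℝ) / T ^ k := by
  have h0 : 0 ≤ v ^ k * Real.exp (-v * T) := by positivity
  rw [abs_of_nonneg h0]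
  have h1 : (v * T) ^ k / k.factorial ≤ Real.exp (v * T) :=
    Real.pow_div_factorial_le_exp _ (by positivity) k
  have hfac : (0:ℝ) < k.factorial := by positivity
  rw [div_le_iff₀ hfac] at h1
  have h2 : v ^ k * Real.exp (-v * T) * T ^ k ≤ (k.factorial : ℝ) := by
    calc v ^ k * Real.exp (-v * T) * T ^ k = (v*T)^k * Real.exp (-(v*T)) := by
          rw [mul_pow]; ring_nf
      _ ≤ (Real.exp (v*T) * k.factorial) * Real.exp (-(v*T)) := by
          gcongr
      _ = (k.factorial : ℝ) * (Real.exp (v*T) * Real.exp (-(v*T))) := by ring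
      _ = k.factorial := by rw [← Real.exp_add]; simp
  rw [le_div_iff₀ (by positivity)]
  exact h2

lemma integrable_pow_exp {μ : Measure ℝ} [IsProbabilityMeasure μ] (hμ : μ (Set.Iic 0) = 0)
    {T : ℝ} (hT : 0 < T) (k : ℕ) :
    Integrable (fun v => v ^ k * Real.exp (-v * T)) μ := by
  refine ⟨(Continuous.aestronglyMeasurable (by fun_prop)), ?_⟩
  apply HasFiniteIntegral.of_bounded (C := (k.factorial : ℝ) / T ^ k)
  filter_upwards [ae_pos' hμ] with v hv
  rw [Real.norm_eq_abs]
  exact pow_exp_bound hv.le hT k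

open MeasureTheory in
lemma hasDerivAt_phi {μ : Measure ℝ} [IsProbabilityMeasure μ] (hμ : μ (Set.Iic 0) = 0)
    (k : ℕ) {T : ℝ} (hT : 0 < T) :
    HasDerivAt (fun x => ∫ v, (-v) ^ k * Real.exp (-v * x) ∂μ)
      (∫ v, (-v) ^ (k+1) * Real.exp (-v * T) ∂μ) T := by
  have hint : ∀ j : ℕ, ∀ x > (0:ℝ), Integrable (fun v => (-v) ^ j * Real.exp (-v * x)) μ := by
    intro j x hx
    have h : (fun v => (-v) ^ j * Real.exp (-v * x)) =
        fun v => (-1:ℝ)^j * (v ^ j * Real.exp (-v * x)) := by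
      funext v; rw [neg_pow]; ring
    rw [h]
    exact (integrable_pow_exp hμ hx j).const_mul _
  have res := hasDerivAt_integral_of_dominated_loc_of_deriv_le (μ := μ)
    (F := fun x v => (-v) ^ k * Real.exp (-v * x))
    (F' := fun x v => (-v) ^ (k+1) * Real.exp (-v * x))
    (bound := fun _ => ((k+1).factorial : ℝ) / (T/2) ^ (k+1))
    (x₀ := T) (s := Metric.ball T (T/2)) (Metric.ball_mem_nhds T (half_pos hT))
    (Filter.Eventually.of_forall fun x => Continuous.aestronglyMeasurable (by fun_prop))
    (hint k T hT)
    (Continuous.aestronglyMeasurable (by fun_prop))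
    ?_ (integrable_const _) ?_
  · exact res.2
  · filter_upwards [ae_pos' hμ] with v hv
    intro x hx
    have hx2 : T/2 < x := by
      have h := abs_lt.1 (by simpa [Metric.mem_ball, Real.dist_eq] using hx)
      linarith [h.1]
    have hnorm : ‖(-v) ^ (k+1) * Real.exp (-v * x)‖ = v ^ (k+1) * Real.exp (-v * x) := by
      rw [Real.norm_eq_abs, abs_mul, abs_pow, abs_neg, abs_of_pos hv,
        abs_of_pos (Real.exp_pos _)]
    rw [hnorm]
    calc v ^ (k+1) * Real.exp (-v * x) ≤ v ^ (k+1) * Real.exp (-v * (T/2)) := by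
          apply mul_le_mul_of_nonneg_left _ (pow_nonneg hv.le _)
          exact Real.exp_le_exp.2 (by nlinarith)
      _ ≤ ((k+1).factorial : ℝ) / (T/2) ^ (k+1) := by
          have h := pow_exp_bound hv.le (half_pos hT) (k+1)
          rwa [abs_of_nonneg (by positivity)] at h
  · filter_upwards with v
    intro x _
    have h1 : HasDerivAt (fun x : ℝ => -v * x) (-v) x := by
      simpa using (hasDerivAt_id x).const_mul (-v)
    have h2 := (h1.exp).const_mul ((-v)^k)
    have e : (-v) ^ (k+1) * Real.exp (-v * x) = (-v) ^ k * (Real.exp (-v * x) * -v) := by ring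
    rw [e]; exact h2

open MeasureTheory in
lemma iterDeriv_psi {μ : Measure ℝ} [IsProbabilityMeasure μ] (hμ : μ (Set.Iic 0) = 0)
    (ψ : ℝ → ℝ) (hψ : ∀ t > (0:ℝ), ψ t = ∫ v, Real.exp (-v * t) ∂μ) (k : ℕ) :
    ∀ T ∈ Set.Ioi (0:ℝ), iteratedDerivWithin k ψ (Set.Ioi 0) T
      = ∫ v, (-v) ^ k * Real.exp (-v * T) ∂μ := by
  induction k with
  | zero =>
    intro T hT
    simp only [iteratedDerivWithin_zero, pow_zero, one_mul]
    exact hψ T hT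
  | succ k ih =>
    intro T hT
    rw [iteratedDerivWithin_succ,
      derivWithin_of_isOpen isOpen_Ioi hT]
    have heq : deriv (iteratedDerivWithin k ψ (Set.Ioi 0)) T
        = deriv (fun x => ∫ v, (-v) ^ k * Real.exp (-v * x) ∂μ) T := by
      apply Filter.EventuallyEq.deriv_eq
      filter_upwards [isOpen_Ioi.mem_nhds hT] with x hx using ih x hx
    rw [heq, (hasDerivAt_phi hμ k hT).deriv]


open MeasureTheory in
/-- mixing the product of inner-generator derivatives with respect to
`F₀ = LS⁻¹[ψ]` yields `∑_{k=d₀}^d b_k ψ^{(k)}(T)`. -/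
theorem stmt11 (μ : Measure ℝ) [IsProbabilityMeasure μ] (hμ : μ (Set.Iic 0) = 0)
    (ψ : ℝ → ℝ) (hψ : ∀ t > (0 : ℝ), ψ t = ∫ v, Real.exp (-v * t) ∂μ)
    (d0 : ℕ) (hd0 : 1 ≤ d0) (dv : Fin d0 → ℕ) (hdv : ∀ s, 1 ≤ dv s)
    (g : Fin d0 → ℝ → ℝ)
    (hg : ∀ s, ContDiffOn ℝ (⊤ : ℕ∞) (g s) (Set.Ioi 0))
    (hg0 : ∀ s, ∀ t > (0 : ℝ), 0 ≤ g s t)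
    (hg' : ∀ s, CMOn (derivWithin (g s) (Set.Ioi 0)))
    (t : Fin d0 → ℝ) (ht : ∀ s, 0 < t s)
    (hT : 0 < ∑ s, g s (t s)) :
    ∫ v, (∏ s, (Real.exp (-v * g s (t s)) *
        ∑ k ∈ Finset.Icc 1 (dv s),
          bellP (dv s) k (fun l => iteratedDerivWithin l (g s) (Set.Ioi 0) (t s)) *
            (-v) ^ k)) ∂μ =
      ∑ k ∈ Finset.Icc d0 (∑ s, dv s),
        (∑ j ∈ QIdx d0 dv k, ∏ s,
          bellP (dv s) (j s) (fun l => iteratedDerivWithin l (g s) (Set.Ioi 0) (t s))) *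
          iteratedDerivWithin k ψ (Set.Ioi 0) (∑ s, g s (t s)) := by
  classical
  set D := ∑ s, dv s with hD
  set T := ∑ s, g s (t s) with hTdef
  set c : Fin d0 → ℕ → ℝ := fun s k =>
    bellP (dv s) k (fun l => iteratedDerivWithin l (g s) (Set.Ioi 0) (t s)) with hc
  have hpsi : ∀ k, iteratedDerivWithin k ψ (Set.Ioi 0) T
      = ∫ v, (-v) ^ k * Real.exp (-v * T) ∂μ :=
    fun k => iterDeriv_psi hμ ψ hψ k T hT
  have hmaps : ∀ j ∈ Fintype.piFinset (fun s : Fin d0 => Finset.Icc 1 (dv s)),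
      (∑ s, j s) ∈ Finset.Icc d0 D := by
    intro j hj
    simp only [Fintype.mem_piFinset, Finset.mem_Icc] at hj
    rw [Finset.mem_Icc]
    constructor
    · calc d0 = ∑ _s : Fin d0, 1 := by simp
        _ ≤ ∑ s, j s := Finset.sum_le_sum fun s _ => (hj s).1
    · exact Finset.sum_le_sum fun s _ => (hj s).2
  have hintegrand : ∀ v : ℝ,
      (∏ s, (Real.exp (-v * g s (t s)) * ∑ k ∈ Finset.Icc 1 (dv s), c s k * (-v) ^ k))
      = ∑ k ∈ Finset.Icc d0 D,
          (∑ j ∈ QIdx d0 dv k, ∏ s, c s (j s)) * ((-v) ^ k * Real.exp (-v * T)) := by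
    intro v
    rw [Finset.prod_mul_distrib]
    have e1 : (∏ s, Real.exp (-v * g s (t s))) = Real.exp (-v * T) := by
      rw [← Real.exp_sum]
      congr 1
      rw [hTdef, Finset.mul_sum]
    rw [e1, Finset.prod_univ_sum, Finset.mul_sum]
    rw [← Finset.sum_fiberwise_of_maps_to hmaps
      (fun j => Real.exp (-v * T) * ∏ s, (c s (j s) * (-v) ^ (j s)))]
    refine Finset.sum_congr rfl fun k _ => ?_
    rw [Finset.sum_mul]
    refine Finset.sum_congr rfl fun j hj => ?_
    have hjk : (∑ s, j s) = k := (Finset.mem_filter.1 hj).2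
    rw [Finset.prod_mul_distrib, Finset.prod_pow_eq_pow_sum, hjk]
    ring
  have hbint : ∀ k ∈ Finset.Icc d0 D, Integrable
      (fun v => (∑ j ∈ QIdx d0 dv k, ∏ s, c s (j s)) * ((-v) ^ k * Real.exp (-v * T))) μ := by
    intro k _
    have h : (fun v => (∑ j ∈ QIdx d0 dv k, ∏ s, c s (j s)) * ((-v) ^ k * Real.exp (-v * T)))
        = fun v => ((∑ j ∈ QIdx d0 dv k, ∏ s, c s (j s)) * (-1:ℝ)^k)
            * (v ^ k * Real.exp (-v * T)) := by
      funext v; rw [neg_pow]; ring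
    rw [h]
    exact (integrable_pow_exp hμ hT k).const_mul _
  calc ∫ v, (∏ s, (Real.exp (-v * g s (t s)) *
        ∑ k ∈ Finset.Icc 1 (dv s), c s k * (-v) ^ k)) ∂μ
      = ∫ v, (∑ k ∈ Finset.Icc d0 D,
          (∑ j ∈ QIdx d0 dv k, ∏ s, c s (j s)) * ((-v) ^ k * Real.exp (-v * T))) ∂μ := by
        exact integral_congr_ae (Filter.Eventually.of_forall fun v => hintegrand v)
    _ = ∑ k ∈ Finset.Icc d0 D, ∫ v,
          (∑ j ∈ QIdx d0 dv k, ∏ s, c s (j s)) * ((-v) ^ k * Real.exp (-v * T)) ∂μ :=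
        integral_finset_sum _ hbint
    _ = ∑ k ∈ Finset.Icc d0 D, (∑ j ∈ QIdx d0 dv k, ∏ s, c s (j s)) *
          iteratedDerivWithin k ψ (Set.Ioi 0) T := by
        refine Finset.sum_congr rfl fun k _ => ?_
        rw [integral_const_mul, hpsi k]
end
end
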